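/- arXiv:0905.1841 — 6 statements merged into one kernel-verified Lean document; each statement's English description precedes it below -/
import Mathlib

section
/- For every number field k of degree d with r₂ complex places, the absolute discriminant satisfies |Δ_k| > (π/4)^{2·r₂} · (2πd)⁻¹ · e^{2d − 1/(6d)}. -/
open NumberField

open Real Stirling in
private lemma my_diff (n : ℕ) :
    Real.log (stirlingSeq (n + 1)) - Real.log (stirlingSeq (n + 2)) <
      1 / (12 * ((n : ℝ) + 1) * ((n : ℝ) + 2)) := by
  set x : ℝ := ((1 : ℝ) / (2 * (↑(n + 1) : ℝ) + 1)) ^ 2 with hxdef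
  have hxpos : 0 < x := by rw [hxdef]; positivity
  have hx0 : 0 ≤ x := le_of_lt hxpos
  have hx1 : x < 1 := by
    rw [hxdef, one_div, inv_pow]
    refine inv_lt_one_of_one_lt₀ (one_lt_pow₀ ?_ two_ne_zero)
    have : (0:ℝ) ≤ (n:ℝ) := Nat.cast_nonneg n
    push_cast
    nlinarith
  have g : HasSum (fun k : ℕ => (1/3 : ℝ) * x ^ (k + 1)) (1/3 * (x / (1 - x))) := by
    have := (hasSum_geometric_of_lt_one hx0 hx1).mul_left x
    simp_rw [← _root_.pow_succ'] at this
    exact this.mul_left (1/3)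
  have hab : ∀ k : ℕ, (1 : ℝ) / (2 * (↑(k + 1) : ℝ) + 1) * x ^ (k + 1) ≤ (1/3 : ℝ) * x ^ (k + 1) := by
    intro k
    apply mul_le_mul_of_nonneg_right _ (pow_nonneg hx0 _)
    have : (0:ℝ) ≤ (k:ℝ) := Nat.cast_nonneg k
    rw [div_le_div_iff₀ (by push_cast; linarith) (by norm_num)]
    push_cast; linarith
  have hstrict : (1 : ℝ) / (2 * ((1 + 1 : ℕ) : ℝ) + 1) * x ^ (1 + 1) < (1/3 : ℝ) * x ^ (1 + 1) := by
    have : (0:ℝ) < x ^ (1 + 1) := pow_pos hxpos _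
    rw [div_mul_eq_mul_div, one_mul, div_lt_iff₀ (by norm_num)]
    push_cast
    nlinarith
  have h := hasSum_lt (i := 1) hab hstrict (log_stirlingSeq_diff_hasSum n) g
  refine h.trans_le (le_of_eq ?_)
  have hne : (2 * ((n:ℝ) + 1) + 1) ≠ 0 := by positivity
  have h1x : 1 - x ≠ 0 := by linarith [hx1]
  rw [hxdef]
  push_cast
  rw [hxdef] at h1x
  push_cast at h1x
  field_simp
  ring_nf
  field_simp
  ring

open Real Stirling in
private lemma log_stirlingSeq_le (n : ℕ) :
    Real.log (stirlingSeq (n + 1)) - 1 / (12 * ((n : ℝ) + 1)) ≤ Real.log (Real.sqrt π) := by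
  have hπ : (0:ℝ) < Real.sqrt π := Real.sqrt_pos.mpr pi_pos
  set f : ℕ → ℝ := fun j => Real.log (stirlingSeq (j + 1)) - 1 / (12 * ((j : ℝ) + 1)) with hf
  have hmono : Monotone f := by
    apply monotone_nat_of_le_succ
    intro j
    have hd := (my_diff j).le
    have e : 1 / (12 * ((j:ℝ) + 1)) - 1 / (12 * ((j:ℝ) + 1 + 1)) =
        1 / (12 * ((j:ℝ) + 1) * ((j:ℝ) + 2)) := by
      have : (0:ℝ) ≤ (j:ℝ) := Nat.cast_nonneg j
      field_simp
      ring
    simp only [hf]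
    push_cast
    have hd2 : Real.log (stirlingSeq (j + 1)) - Real.log (stirlingSeq (j + 1 + 1)) ≤
        1 / (12 * ((j:ℝ) + 1) * ((j:ℝ) + 2)) := hd
    linarith
  have htend : Filter.Tendsto f Filter.atTop (nhds (Real.log (Real.sqrt π))) := by
    have h1 : Filter.Tendsto (fun j : ℕ => Real.log (stirlingSeq (j + 1))) Filter.atTop
        (nhds (Real.log (Real.sqrt π))) := by
      have := tendsto_stirlingSeq_sqrt_pi.comp (Filter.tendsto_add_atTop_nat 1)
      exact ((Real.continuousAt_log hπ.ne').tendsto.comp this)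
    have h2 : Filter.Tendsto (fun j : ℕ => 1 / (12 * ((j : ℝ) + 1))) Filter.atTop (nhds 0) := by
      have hh : Filter.Tendsto (fun j : ℕ => 12 * ((j : ℝ) + 1)) Filter.atTop Filter.atTop := by
        apply Filter.Tendsto.const_mul_atTop (by norm_num : (0:ℝ) < 12)
        exact Filter.tendsto_atTop_add_const_right _ 1 tendsto_natCast_atTop_atTop
      exact Filter.Tendsto.div_atTop tendsto_const_nhds hh
    have h3 := h1.sub h2
    rw [sub_zero] at h3
    simp only [hf]
    exact h3
  exact hmono.ge_of_tendsto htend n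

open Real Stirling in
private lemma stirlingSeq_lt (n : ℕ) :
    stirlingSeq (n + 1) < Real.sqrt π * Real.exp (1 / (12 * ((n : ℝ) + 1))) := by
  have hπ : (0:ℝ) < Real.sqrt π := Real.sqrt_pos.mpr pi_pos
  have hpos : 0 < stirlingSeq (n + 1) := stirlingSeq'_pos n
  have key : Real.log (stirlingSeq (n + 1)) <
      Real.log (Real.sqrt π) + 1 / (12 * ((n : ℝ) + 1)) := by
    have h1 := my_diff n
    have h2 := log_stirlingSeq_le (n + 1)
    push_cast at h2
    have hN : (0:ℝ) ≤ (n:ℝ) := Nat.cast_nonneg n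
    have e : 1 / (12 * ((n:ℝ) + 1) * ((n:ℝ) + 2)) + 1 / (12 * ((n:ℝ) + 1 + 1))
        ≤ 1 / (12 * ((n:ℝ) + 1)) := by
      rw [div_add_div _ _ (by positivity) (by positivity), div_le_div_iff₀ (by positivity) (by positivity)]
      ring_nf
      nlinarith
    have h1' : Real.log (stirlingSeq (n + 1)) - Real.log (stirlingSeq (n + 1 + 1)) <
        1 / (12 * ((n:ℝ) + 1) * ((n:ℝ) + 2)) := h1
    linarith
  calc stirlingSeq (n + 1) = Real.exp (Real.log (stirlingSeq (n + 1))) := (Real.exp_log hpos).symm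
    _ < Real.exp (Real.log (Real.sqrt π) + 1 / (12 * ((n : ℝ) + 1))) := Real.exp_lt_exp.mpr key
    _ = Real.sqrt π * Real.exp (1 / (12 * ((n : ℝ) + 1))) := by
        rw [Real.exp_add, Real.exp_log hπ]

open Real Stirling in
private lemma factorial_lt_stirling (n : ℕ) (hn : n ≠ 0) :
    (Nat.factorial n : ℝ) < Real.sqrt (2 * π * n) * ((n : ℝ) / Real.exp 1) ^ n
      * Real.exp (1 / (12 * (n : ℝ))) := by
  obtain ⟨m, rfl⟩ := Nat.exists_eq_succ_of_ne_zero hn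
  have h := stirlingSeq_lt m
  have hpos : (0:ℝ) < Real.sqrt (2 * ((m:ℝ) + 1)) * (((m:ℝ) + 1) / Real.exp 1) ^ (m + 1) := by
    positivity
  have hs : stirlingSeq (m + 1)
      = (Nat.factorial (m + 1) : ℝ)
        / (Real.sqrt (2 * ((m:ℝ) + 1)) * (((m:ℝ) + 1) / Real.exp 1) ^ (m + 1)) := by
    rw [stirlingSeq]; push_cast; ring_nf
  rw [hs, div_lt_iff₀ hpos] at h
  have hsqrt : Real.sqrt π * Real.sqrt (2 * ((m:ℝ) + 1)) = Real.sqrt (2 * π * ((m:ℝ) + 1)) := by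
    rw [← Real.sqrt_mul pi_nonneg]
    ring_nf
  calc (Nat.factorial (m + 1) : ℝ)
      < Real.sqrt π * Real.exp (1 / (12 * ((m:ℝ) + 1)))
        * (Real.sqrt (2 * ((m:ℝ) + 1)) * (((m:ℝ) + 1) / Real.exp 1) ^ (m + 1)) := h
    _ = Real.sqrt (2 * π * (↑(m + 1) : ℝ)) * ((↑(m + 1) : ℝ) / Real.exp 1) ^ (m + 1)
        * Real.exp (1 / (12 * (↑(m + 1) : ℝ))) := by
        push_cast
        rw [← hsqrt]
        ring

open Real NumberField.InfinitePlace Module in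
/-- For every number field `k` of degree `d` with `r₂` complex places,
`|Δ_k| > (π/4)^{2r₂} · (2πd)⁻¹ · e^{2d − 1/(6d)}`. -/
theorem stmt_1 (k : Type) [Field k] [NumberField k] :
    (Real.pi / 4) ^ (2 * InfinitePlace.nrComplexPlaces k) *
        (2 * Real.pi * (Module.finrank ℚ k : ℝ))⁻¹ *
        Real.exp (2 * (Module.finrank ℚ k : ℝ) - 1 / (6 * (Module.finrank ℚ k : ℝ)))
      < |(NumberField.discr k : ℝ)| := by
  obtain ⟨x, h_nz, h_bd⟩ := exists_ne_zero_mem_ringOfIntegers_of_norm_le_mul_sqrt_discr k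
  have h_nm : (1 : ℝ) ≤ |Algebra.norm ℚ (x : k)| := by
    rw [← Algebra.coe_norm_int, ← Int.cast_one, ← Int.cast_abs, Rat.cast_intCast, Int.cast_le]
    exact Int.one_le_abs (Algebra.norm_ne_zero_iff.mpr h_nz)
  replace h_bd := le_trans h_nm h_bd
  set d := Module.finrank ℚ k with hd
  set r := InfinitePlace.nrComplexPlaces k with hr
  have hd1 : 1 ≤ d := Module.finrank_pos
  have hdR : (1:ℝ) ≤ (d:ℝ) := by exact_mod_cast hd1
  have hdpos : (0:ℝ) < (d:ℝ) := by linarith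
  have hπ : (0:ℝ) < π := pi_pos
  set D : ℝ := |(NumberField.discr k : ℝ)| with hD
  have hDnn : 0 ≤ D := abs_nonneg _
  have hfacpos : (0:ℝ) < (Nat.factorial d : ℝ) := by
    exact_mod_cast Nat.factorial_pos d
  have hC : (0:ℝ) < (4 / π) ^ r * (Nat.factorial d : ℝ) / (d:ℝ) ^ d := by positivity
  -- step 1: sqrt D is at least (π/4)^r d^d / d!
  have h1' : ((4 / π) ^ r * (Nat.factorial d : ℝ) / (d:ℝ) ^ d)⁻¹ ≤ Real.sqrt D := by
    have h := mul_le_mul_of_nonneg_left h_bd (inv_pos.mpr hC).le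
    rwa [mul_one, ← mul_assoc, inv_mul_cancel₀ hC.ne', one_mul] at h
  have h1 : (π / 4) ^ r * (d:ℝ) ^ d / (Nat.factorial d : ℝ) ≤ Real.sqrt D := by
    refine le_trans (le_of_eq ?_) h1'
    rw [inv_div, div_pow, div_pow]
    field_simp
  -- step 2: D ≥ (π/4)^(2r) * d^(2d) / (d!)^2
  have hLpos : (0:ℝ) ≤ (π / 4) ^ r * (d:ℝ) ^ d / (Nat.factorial d : ℝ) := by positivity
  have h2 : ((π / 4) ^ r * (d:ℝ) ^ d / (Nat.factorial d : ℝ)) ^ 2 ≤ D := by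
    have h := mul_self_le_mul_self hLpos h1
    rwa [Real.mul_self_sqrt hDnn, ← pow_two] at h
  have h2' : (π / 4) ^ (2 * r) * (d:ℝ) ^ (2 * d) / (Nat.factorial d : ℝ) ^ 2 ≤ D := by
    refine le_trans (le_of_eq ?_) h2
    conv_rhs => rw [div_pow, mul_pow, ← pow_mul, ← pow_mul]
    rw [mul_comm r 2, mul_comm d 2]
  refine lt_of_lt_of_le ?_ h2'
  -- step 3: the Stirling estimate
  have hfac := factorial_lt_stirling d (by omega)
  have hfac2 : (Nat.factorial d : ℝ) ^ 2 <
      2 * π * (d:ℝ) * ((d:ℝ) ^ (2 * d) / Real.exp (2 * (d:ℝ))) * Real.exp (1 / (6 * (d:ℝ))) := by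
    have hsq := mul_self_lt_mul_self hfacpos.le hfac
    rw [← pow_two, ← pow_two] at hsq
    refine hsq.trans_eq ?_
    have e3 : (((d:ℝ) / Real.exp 1) ^ d) ^ 2 = (d:ℝ) ^ (2 * d) / Real.exp (2 * (d:ℝ)) := by
      rw [← pow_mul, mul_comm d 2, div_pow, ← Real.exp_nat_mul]
      push_cast
      ring_nf
    have e4 : Real.exp (1 / (12 * (d:ℝ))) ^ 2 = Real.exp (1 / (6 * (d:ℝ))) := by
      rw [sq, ← Real.exp_add]
      congr 1
      field_simp
      ring
    rw [mul_pow, mul_pow, Real.sq_sqrt (by positivity), e3, e4]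
  -- step 4: conclude
  have hexp : Real.exp (2 * (d:ℝ) - 1 / (6 * (d:ℝ)))
      = Real.exp (2 * (d:ℝ)) / Real.exp (1 / (6 * (d:ℝ))) := Real.exp_sub _ _
  have hcore : (2 * π * (d:ℝ))⁻¹ * Real.exp (2 * (d:ℝ) - 1 / (6 * (d:ℝ)))
      < (d:ℝ) ^ (2 * d) / (Nat.factorial d : ℝ) ^ 2 := by
    have h := div_lt_div_of_pos_left (by positivity : (0:ℝ) < (d:ℝ) ^ (2 * d))
      (by positivity : (0:ℝ) < (Nat.factorial d : ℝ) ^ 2) hfac2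
    refine lt_of_eq_of_lt ?_ h
    rw [hexp]
    have hexppos : (0:ℝ) < Real.exp (2 * (d:ℝ)) := Real.exp_pos _
    have hexppos2 : (0:ℝ) < Real.exp (1 / (6 * (d:ℝ))) := Real.exp_pos _
    field_simp
  calc (π / 4) ^ (2 * r) * (2 * π * (d:ℝ))⁻¹ * Real.exp (2 * (d:ℝ) - 1 / (6 * (d:ℝ)))
      = (π / 4) ^ (2 * r) * ((2 * π * (d:ℝ))⁻¹ * Real.exp (2 * (d:ℝ) - 1 / (6 * (d:ℝ)))) := by
        ring
    _ < (π / 4) ^ (2 * r) * ((d:ℝ) ^ (2 * d) / (Nat.factorial d : ℝ) ^ 2) := by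
        exact mul_lt_mul_of_pos_left hcore (by positivity)
    _ = (π / 4) ^ (2 * r) * (d:ℝ) ^ (2 * d) / (Nat.factorial d : ℝ) ^ 2 := by ring
end

section
/- Let k be a totally real number field of degree d ≥ 2 with real embeddings v₁, …, v_d : k → ℝ. Then there exists an algebraic integer θ ∈ 𝓞_k such that 1 < v₁(θ) ≤ 2^{d−1}·√|Δ_k| and |v_j(θ)| ≤ 1/2 for all j ≥ 2; moreover any such θ satisfies |N_{k/ℚ}(1 − θ)| ≤ 3^{d−1}·√|Δ_k| + (3/2)^{d−1}. -/
/-!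
The box `|v₁| ≤ 2^(d-1) √|Δ_k|`, `|v_j| ≤ 1/2` for `j ≥ 2` has exactly the critical volume
`2^d √|Δ_k|` for Minkowski's theorem, so it contains a nonzero `θ ∈ 𝓞_k`; the closed box is reached
from slightly larger open ones because only finitely many algebraic integers have bounded
conjugates. As `|N(θ)| ≥ 1` while the other conjugates are at most `1/2`, `|v₁(θ)| ≥ 2^(d-1) ≥ 2`,
and `±θ` has `v₁ > 1`. Finally `|N(1 - θ)| = ∏ |1 - v_j(θ)| ≤ (v₁(θ) - 1) (3/2)^(d-1)`.
-/

open Module NumberField NumberField.InfinitePlace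

theorem Set.Finite.exists_forall_le_of_forall_exists_forall_lt_add {ι α : Type*} [Fintype ι]
    [Nonempty ι] {s : Set α} (hs : s.Finite) {g : ι → α → ℝ} {B : ι → ℝ}
    (h : ∀ ε > 0, ∃ x ∈ s, ∀ i, g i x < B i + ε) : ∃ x ∈ s, ∀ i, g i x ≤ B i := by
  let excess (x : α) : ℝ := Finset.univ.sup' Finset.univ_nonempty fun i => g i x - B i
  obtain ⟨x, hx, -⟩ := h 1 one_pos
  obtain ⟨a, has, hmin⟩ := s.exists_min_image excess hs ⟨x, hx⟩
  suffices excess a ≤ 0 by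
    refine ⟨a, has, fun i => ?_⟩
    have := (Finset.sup'_le_iff _ _).mp this i (Finset.mem_univ i)
    linarith
  by_contra! hpos
  obtain ⟨b, hbs, hb⟩ := h (excess a) hpos
  have : excess b < excess a :=
    (Finset.sup'_lt_iff _).mpr fun i _ => by linarith [hb i]
  exact (hmin b hbs).not_gt this

theorem Fintype.prod_ite_eq_mul_pow {ι M : Type*} [Fintype ι] [DecidableEq ι] [CommMonoid M]
    (i₀ : ι) (a b : M) : (∏ i, if i = i₀ then a else b) = a * b ^ (Fintype.card ι - 1) := by
  rw [← Finset.mul_prod_erase _ _ (Finset.mem_univ i₀), if_pos rfl,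
    Finset.prod_congr rfl fun i hi => if_neg (Finset.ne_of_mem_erase hi), Finset.prod_const,
    Finset.card_erase_of_mem (Finset.mem_univ i₀), Finset.card_univ]

theorem Fintype.prod_le_apply_mul_pow {ι : Type*} [Fintype ι] [DecidableEq ι]
    {g : ι → ℝ} (hg : ∀ i, 0 ≤ g i) (i₀ : ι) {c : ℝ} (hc : ∀ i ≠ i₀, g i ≤ c) :
    ∏ i, g i ≤ g i₀ * c ^ (Fintype.card ι - 1) := by
  rw [← Finset.mul_prod_erase Finset.univ g (Finset.mem_univ i₀)]
  gcongr
  · exact hg i₀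
  · calc ∏ i ∈ Finset.univ.erase i₀, g i ≤ ∏ _i ∈ Finset.univ.erase i₀, c :=
          Finset.prod_le_prod (fun i _ => hg i) fun i hi => hc i (Finset.ne_of_mem_erase hi)
      _ = c ^ (Fintype.card ι - 1) := by
          rw [Finset.prod_const, Finset.card_erase_of_mem (Finset.mem_univ i₀), Finset.card_univ]

namespace NumberField

variable {K : Type*} [Field K]

theorem isTotallyReal_of_forall_im_eq_zero (h : ∀ φ : K →+* ℂ, ∀ x, (φ x).im = 0) :
    IsTotallyReal K where
  isReal w := by
    rw [← mk_embedding w, isReal_mk_iff, ComplexEmbedding.isReal_iff]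
    ext x
    apply Complex.ext <;> simp [h]

theorem InfinitePlace.mk_comp_ofRealHom_apply (σ : K →+* ℝ) (x : K) :
    InfinitePlace.mk (Complex.ofRealHom.comp σ) x = |σ x| := by
  simp [InfinitePlace.apply]

theorem InfinitePlace.mk_comp_ofRealHom_injective :
    Function.Injective fun σ : K →+* ℝ => InfinitePlace.mk (Complex.ofRealHom.comp σ) := by
  intro σ τ h
  have hreal : ∀ ρ : K →+* ℝ, ComplexEmbedding.conjugate (Complex.ofRealHom.comp ρ) =
      Complex.ofRealHom.comp ρ := fun ρ => by ext x; simp [ComplexEmbedding.conjugate_coe_eq]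
  rw [mk_eq_iff, hreal, or_self] at h
  ext x
  simpa using RingHom.congr_fun h x

variable [NumberField K]

theorem norm_eq_prod_of_injective {v : Fin (finrank ℚ K) → K →+* ℝ}
    (hv : Function.Injective v) (x : K) : (Algebra.norm ℚ x : ℝ) = ∏ j, v j x := by
  have hbij : Function.Bijective fun j => (Complex.ofRealHom.comp (v j)).toRatAlgHom := by
    refine (Fintype.bijective_iff_injective_and_card _).mpr ⟨fun i j hij => hv ?_, by simp⟩
    ext x
    simpa using AlgHom.congr_fun hij x
  apply Complex.ofReal_injective
  have := Algebra.norm_eq_prod_embeddings ℚ ℂ x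
  rw [eq_ratCast] at this
  push_cast
  rw [this]
  exact (Fintype.prod_bijective _ hbij _ _ fun j => rfl).symm

theorem abs_norm_one_sub_le {v : Fin (finrank ℚ K) → K →+* ℝ} (hv : Function.Injective v)
    (i₀ : Fin (finrank ℚ K)) {x : K} {c : ℝ} (hc : ∀ j ≠ i₀, |v j x| ≤ c) :
    |(Algebra.norm ℚ (1 - x) : ℝ)| ≤ |1 - v i₀ x| * (1 + c) ^ (finrank ℚ K - 1) := by
  rw [norm_eq_prod_of_injective hv, Finset.abs_prod]
  simp only [map_sub, map_one]
  simpa only [Fintype.card_fin] using Fintype.prod_le_apply_mul_pow (fun j => abs_nonneg _) i₀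
    fun j hj => (abs_sub _ _).trans (by rw [abs_one]; linarith [hc j hj])

theorem one_le_abs_mul_pow {v : Fin (finrank ℚ K) → K →+* ℝ} (hv : Function.Injective v)
    (i₀ : Fin (finrank ℚ K)) {a : 𝓞 K} (ha : a ≠ 0) {c : ℝ} (hc : ∀ j ≠ i₀, |v j a| ≤ c) :
    1 ≤ |v i₀ a| * c ^ (finrank ℚ K - 1) := by
  have hnorm : 1 ≤ ∏ j, |v j a| := by
    rw [← Finset.abs_prod, ← norm_eq_prod_of_injective hv, ← Algebra.coe_norm_int,
      Rat.cast_intCast, ← Int.cast_abs]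
    exact_mod_cast Int.one_le_abs (Algebra.norm_ne_zero_iff.mpr ha)
  simpa only [Fintype.card_fin] using
    hnorm.trans (Fintype.prod_le_apply_mul_pow (fun j => abs_nonneg (v j a)) i₀ hc)

theorem finite_setOf_forall_infinitePlace_le (r : ℝ) :
    {a : 𝓞 K | ∀ w : InfinitePlace K, w a ≤ r}.Finite :=
  ((Embeddings.finite_of_norm_le K ℂ r).preimage RingOfIntegers.coe_injective.injOn).subset
    fun a ha => ⟨a.isIntegral_coe, fun φ => ha (InfinitePlace.mk φ)⟩

section IsTotallyReal

open MeasureTheory mixedEmbedding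
open scoped NNReal

variable [IsTotallyReal K]

theorem card_infinitePlace_of_isTotallyReal :
    Fintype.card (InfinitePlace K) = finrank ℚ K := by
  rw [card_eq_nrRealPlaces_add_nrComplexPlaces, IsTotallyReal.nrComplexPlaces_eq_zero,
    IsTotallyReal.finrank, add_zero]

theorem exists_ne_zero_forall_infinitePlace_lt_of_isTotallyReal {f : InfinitePlace K → ℝ≥0}
    (h : √|(discr K : ℝ)| < ∏ w, (f w : ℝ)) : ∃ a : 𝓞 K, a ≠ 0 ∧ ∀ w, w a < f w := by
  classical
  refine exists_ne_zero_mem_ringOfIntegers_lt K ?_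
  rw [minkowskiBound, volume_fundamentalDomain_fractionalIdealLatticeBasis,
    volume_fundamentalDomain_latticeBasis, convexBodyLT_volume, mixedEmbedding.finrank]
  simp only [convexBodyLTFactor, ← IsTotallyReal.finrank, IsTotallyReal.nrComplexPlaces_eq_zero,
    IsTotallyReal.mult_eq, FractionalIdeal.absNorm_one, Units.val_one, Rat.cast_one,
    ENNReal.ofReal_one, pow_zero, pow_one, one_mul, mul_one]
  have hprod : NNReal.sqrt ‖discr K‖₊ < ∏ w, f w := by
    rwa [← NNReal.coe_lt_coe, Real.coe_sqrt, coe_nnnorm, Int.norm_eq_abs, NNReal.coe_prod]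
  rw [mul_comm]
  exact_mod_cast mul_lt_mul_of_pos_left hprod (by positivity)

theorem exists_ne_zero_forall_infinitePlace_le_of_isTotallyReal {f : InfinitePlace K → ℝ≥0}
    (h : √|(discr K : ℝ)| ≤ ∏ w, (f w : ℝ)) : ∃ a : 𝓞 K, a ≠ 0 ∧ ∀ w, w a ≤ f w := by
  have hf : ∀ w, 0 < (f w : ℝ) := by
    have hsqrt : 0 < √|(discr K : ℝ)| := by simpa using discr_ne_zero K
    have := Finset.prod_ne_zero_iff.mp (hsqrt.trans_le h).ne'
    exact fun w => lt_of_le_of_ne (f w).2 (this w (Finset.mem_univ w)).symm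
  set s := {a : 𝓞 K | a ≠ 0 ∧ ∀ w : InfinitePlace K, w a < f w + 1}
  have hs : s.Finite :=
    (finite_setOf_forall_infinitePlace_le (∑ w, (f w : ℝ) + 1)).subset fun a ha w => by
      have := Finset.single_le_sum (fun w _ => (hf w).le) (Finset.mem_univ w)
      linarith [ha.2 w]
  have hbox : ∀ ε > 0, ∃ a ∈ s, ∀ w : InfinitePlace K, w a < f w + ε := by
    intro ε hε
    set δ : ℝ≥0 := (min ε 1).toNNReal
    have hδ : (δ : ℝ) = min ε 1 := Real.coe_toNNReal _ (le_min hε.le zero_le_one)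
    obtain ⟨a, ha, hlt⟩ := exists_ne_zero_forall_infinitePlace_lt_of_isTotallyReal
      (f := fun w => f w + δ) <| h.trans_lt <| by
        push_cast
        exact Finset.prod_lt_prod_of_nonempty (fun w _ => hf w)
          (fun w _ => by simp [hδ, hε]) Finset.univ_nonempty
    have hlt' : ∀ w : InfinitePlace K, w a < f w + min ε 1 := fun w => by simpa [hδ] using hlt w
    exact ⟨a, ⟨ha, fun w => (hlt' w).trans_le (by simp)⟩, fun w => (hlt' w).trans_le (by simp)⟩
  obtain ⟨a, ⟨ha, -⟩, hle⟩ := hs.exists_forall_le_of_forall_exists_forall_lt_add hbox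
  exact ⟨a, ha, hle⟩

theorem exists_ne_zero_abs_le_of_isTotallyReal {v : Fin (finrank ℚ K) → K →+* ℝ}
    (hv : Function.Injective v) (i₀ : Fin (finrank ℚ K)) :
    ∃ a : 𝓞 K, a ≠ 0 ∧ |v i₀ a| ≤ 2 ^ (finrank ℚ K - 1) * √|(discr K : ℝ)| ∧
      ∀ j ≠ i₀, |v j a| ≤ 1 / 2 := by
  classical
  set w₀ := InfinitePlace.mk (Complex.ofRealHom.comp (v i₀))
  set f : InfinitePlace K → ℝ≥0 := fun w =>
    if w = w₀ then 2 ^ (finrank ℚ K - 1) * NNReal.sqrt ‖discr K‖₊ else 1 / 2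
  have hprod : √|(discr K : ℝ)| = ∏ w, (f w : ℝ) := by
    push_cast [f, apply_ite]
    rw [Fintype.prod_ite_eq_mul_pow, card_infinitePlace_of_isTotallyReal, Int.norm_eq_abs,
      mul_right_comm, ← mul_pow]
    norm_num
  obtain ⟨a, ha, hle⟩ := exists_ne_zero_forall_infinitePlace_le_of_isTotallyReal hprod.le
  refine ⟨a, ha, by simpa [f, w₀, mk_comp_ofRealHom_apply, Int.norm_eq_abs] using hle w₀,
    fun j hj => ?_⟩
  have hne : InfinitePlace.mk (Complex.ofRealHom.comp (v j)) ≠ w₀ :=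
    fun h => hj (hv (mk_comp_ofRealHom_injective h))
  simpa [f, hne, mk_comp_ofRealHom_apply] using
    hle (InfinitePlace.mk (Complex.ofRealHom.comp (v j)))

theorem exists_pisot_of_isTotallyReal (hd : 2 ≤ finrank ℚ K)
    {v : Fin (finrank ℚ K) → K →+* ℝ} (hv : Function.Injective v)
    (i₀ : Fin (finrank ℚ K)) :
    ∃ θ : 𝓞 K, 1 < v i₀ θ ∧ v i₀ θ ≤ 2 ^ (finrank ℚ K - 1) * √|(discr K : ℝ)| ∧
      ∀ j ≠ i₀, |v j θ| ≤ 1 / 2 := by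
  obtain ⟨a, ha, hle, hsmall⟩ := exists_ne_zero_abs_le_of_isTotallyReal hv i₀
  have hlarge : 1 < |v i₀ a| := by
    have h := one_le_abs_mul_pow hv i₀ ha hsmall
    rw [one_div_pow, mul_one_div, le_div_iff₀ (by positivity), one_mul] at h
    calc (1 : ℝ) < 2 := one_lt_two
      _ ≤ 2 ^ (finrank ℚ K - 1) := le_self_pow₀ one_le_two (by omega)
      _ ≤ |v i₀ a| := h
  rcases abs_choice (v i₀ a) with h | h
  · exact ⟨a, h ▸ hlarge, h ▸ hle, hsmall⟩
  · refine ⟨-a, ?_, ?_, fun j hj => ?_⟩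
    · simpa [← h] using hlarge
    · simpa [← h] using hle
    · simpa using hsmall j hj

end IsTotallyReal

end NumberField

/-- Minkowski-type construction of a Pisot element: for a totally real number field `k` of
degree `d ≥ 2` with real embeddings `v₀, …, v_{d−1}`, there exists `θ ∈ 𝓞_k` with
`1 < v₀(θ) ≤ 2^{d−1}√|Δ_k|` and `|v_j(θ)| ≤ 1/2` for `j ≠ 0`; moreover any such `θ`
satisfies `|N_{k/ℚ}(1 − θ)| ≤ 3^{d−1}√|Δ_k| + (3/2)^{d−1}`. -/
theorem stmt_5 (k : Type) [Field k] [NumberField k]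
    (htr : ∀ φ : k →+* ℂ, ∀ x : k, (φ x).im = 0)
    (hd : 2 ≤ Module.finrank ℚ k)
    (v : Fin (Module.finrank ℚ k) → (k →+* ℝ)) (hv : Function.Bijective v) :
    (∃ θ : 𝓞 k,
        1 < v ⟨0, by omega⟩ (θ : k) ∧
        v ⟨0, by omega⟩ (θ : k) ≤
          2 ^ (Module.finrank ℚ k - 1) * Real.sqrt |(NumberField.discr k : ℝ)| ∧
        ∀ j, j ≠ ⟨0, by omega⟩ → |v j (θ : k)| ≤ 1 / 2) ∧
    ∀ θ : 𝓞 k,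
      (1 < v ⟨0, by omega⟩ (θ : k) ∧
        v ⟨0, by omega⟩ (θ : k) ≤
          2 ^ (Module.finrank ℚ k - 1) * Real.sqrt |(NumberField.discr k : ℝ)| ∧
        ∀ j, j ≠ ⟨0, by omega⟩ → |v j (θ : k)| ≤ 1 / 2) →
      |((Algebra.norm ℚ (1 - (θ : k)) : ℚ) : ℝ)| ≤
        3 ^ (Module.finrank ℚ k - 1) * Real.sqrt |(NumberField.discr k : ℝ)|
          + (3 / 2) ^ (Module.finrank ℚ k - 1) := by
  have := isTotallyReal_of_forall_im_eq_zero htr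
  refine ⟨exists_pisot_of_isTotallyReal hd hv.1 _, fun θ ⟨hlarge, hle, hsmall⟩ => ?_⟩
  calc |((Algebra.norm ℚ (1 - (θ : k)) : ℚ) : ℝ)|
      ≤ |1 - v ⟨0, by omega⟩ θ| * (1 + 1 / 2) ^ (Module.finrank ℚ k - 1) :=
        abs_norm_one_sub_le hv.1 _ hsmall
    _ ≤ 2 ^ (Module.finrank ℚ k - 1) * √|(discr k : ℝ)| * (3 / 2) ^ (Module.finrank ℚ k - 1) := by
        rw [abs_sub_comm, abs_of_pos (by linarith)]
        gcongr
        · linarith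
        · norm_num
    _ = 3 ^ (Module.finrank ℚ k - 1) * √|(discr k : ℝ)| := by
        rw [mul_right_comm, ← mul_pow]
        norm_num
    _ ≤ 3 ^ (Module.finrank ℚ k - 1) * √|(discr k : ℝ)| + (3 / 2) ^ (Module.finrank ℚ k - 1) :=
        le_add_of_nonneg_right (by positivity)
end

section
/- There exists an absolute constant δ > 0 with the following property: for every totally real number field k of degree d ≥ 2 with real embeddings v₁, …, v_d : k → ℝ, there exists θ ∈ 𝓞_k such that v₁(θ) > 1, |v_j(θ)| < 1 for all j ≠ 1, θ generates k over ℚ (ℚ(θ) = k), and |N_{k/ℚ}(1 − θ)| < |Δ_k|^δ. -/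
open NumberField NumberField.InfinitePlace NumberField.mixedEmbedding Module Finset MeasureTheory
open scoped NNReal ENNReal Real

section aux
variable (k : Type) [Field k] [NumberField k]

lemma aux_allreal (hTR : ∀ φ : k →+* ℂ, ∀ x : k, (φ x).im = 0) :
    ∀ w : InfinitePlace k, IsReal w := by
  intro w
  rw [InfinitePlace.isReal_iff, NumberField.ComplexEmbedding.isReal_iff]
  ext x
  rw [NumberField.ComplexEmbedding.conjugate_coe_eq, Complex.conj_eq_iff_im]
  exact hTR w.embedding x

lemma aux_nrc (hTR : ∀ φ : k →+* ℂ, ∀ x : k, (φ x).im = 0) :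
    nrComplexPlaces k = 0 := by
  have : IsEmpty {w : InfinitePlace k // IsComplex w} :=
    ⟨fun w => (not_isReal_iff_isComplex.mpr w.2) (aux_allreal k hTR w.1)⟩
  simpa [nrComplexPlaces] using Fintype.card_eq_zero (α := {w : InfinitePlace k // IsComplex w})

lemma aux_card (hTR : ∀ φ : k →+* ℂ, ∀ x : k, (φ x).im = 0) :
    Fintype.card (InfinitePlace k) = finrank ℚ k := by
  have h1 := card_add_two_mul_card_eq_rank k
  have h2 := card_eq_nrRealPlaces_add_nrComplexPlaces k
  rw [aux_nrc k hTR] at h1 h2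
  omega

lemma aux_nrr (hTR : ∀ φ : k →+* ℂ, ∀ x : k, (φ x).im = 0) :
    nrRealPlaces k = finrank ℚ k := by
  have h1 := card_add_two_mul_card_eq_rank k
  rw [aux_nrc k hTR] at h1
  omega

end aux

section main
variable (k : Type) [Field k] [NumberField k]

noncomputable def WW (v : Fin (finrank ℚ k) → (k →+* ℝ)) (j : Fin (finrank ℚ k)) :
    InfinitePlace k :=
  InfinitePlace.mk (Complex.ofRealHom.comp (v j))

lemma WW_apply (v : Fin (finrank ℚ k) → (k →+* ℝ)) (j) (x : k) :
    WW k v j x = |v j x| := by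
  rw [WW, InfinitePlace.apply]
  simp

lemma WW_inj (v : Fin (finrank ℚ k) → (k →+* ℝ)) (hv : Function.Injective v) :
    Function.Injective (WW k v) := by
  intro i j hij
  rw [WW, WW, InfinitePlace.mk_eq_iff] at hij
  have h : Complex.ofRealHom.comp (v i) = Complex.ofRealHom.comp (v j) := by
    rcases hij with h | h
    · exact h
    · rw [← h]
      ext x
      simp [NumberField.ComplexEmbedding.conjugate_coe_eq]
  apply hv
  ext x
  have := RingHom.congr_fun h x
  simpa using this

lemma WW_bij (hTR : ∀ φ : k →+* ℂ, ∀ x : k, (φ x).im = 0)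
    (v : Fin (finrank ℚ k) → (k →+* ℝ)) (hv : Function.Bijective v) :
    Function.Bijective (WW k v) := by
  rw [Fintype.bijective_iff_injective_and_card]
  exact ⟨WW_inj k v hv.1, by rw [Fintype.card_fin, aux_card k hTR]⟩

end main

section mink
variable (k : Type) [Field k] [NumberField k]

lemma aux_exists (hTR : ∀ φ : k →+* ℂ, ∀ x : k, (φ x).im = 0)
    (hd : 2 ≤ finrank ℚ k) (v : Fin (finrank ℚ k) → (k →+* ℝ))
    (hv : Function.Bijective v) (h0 : 0 < finrank ℚ k) :
    ∃ a : 𝓞 k, a ≠ 0 ∧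
      (WW k v ⟨0, h0⟩) (a : k) < (2:ℝ) ^ (finrank ℚ k) * Real.sqrt |(discr k : ℝ)| ∧
      ∀ w : InfinitePlace k, w ≠ WW k v ⟨0, h0⟩ → w (a : k) < 1/2 := by
  classical
  set w₀ := WW k v ⟨0, h0⟩ with hw₀
  set s : ℝ≥0 := NNReal.sqrt ‖discr k‖₊ with hs_def
  set B : ℝ≥0 := 2 ^ (finrank ℚ k) * s with hB_def
  set f : InfinitePlace k → ℝ≥0 := fun w => if w = w₀ then B else 2⁻¹ with hf_def
  have hs_pos : 0 < s := by
    rw [hs_def, NNReal.sqrt_pos]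
    simpa using discr_ne_zero k
  have hmult : ∀ w : InfinitePlace k, mult w = 1 := fun w => by
    rw [mult, if_pos (aux_allreal k hTR w)]
  have hprodf : ∏ w, f w ^ mult w = B * 2⁻¹ ^ ((finrank ℚ k) - 1) := by
    simp_rw [hmult, pow_one]
    rw [← Finset.mul_prod_erase Finset.univ f (Finset.mem_univ w₀)]
    congr 1
    · simp [hf_def]
    · rw [Finset.prod_congr rfl (fun w hw => if_neg (Finset.ne_of_mem_erase hw)),
        Finset.prod_const, Finset.card_erase_of_mem (Finset.mem_univ w₀),
        Finset.card_univ, aux_card k hTR]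
  have hfac : convexBodyLTFactor k = 2 ^ (finrank ℚ k) := by
    rw [convexBodyLTFactor, aux_nrr k hTR, aux_nrc k hTR, pow_zero, mul_one]
  have hvol : volume (convexBodyLT k f) = ((2 ^ (finrank ℚ k) * (B * 2⁻¹ ^ ((finrank ℚ k) - 1)) : ℝ≥0) : ℝ≥0∞) := by
    rw [convexBodyLT_volume, hfac]
    rw [← hprodf]
    push_cast
    rfl
  have hmb : minkowskiBound k ↑1 = ((s * 2 ^ (finrank ℚ k) : ℝ≥0) : ℝ≥0∞) := by
    rw [minkowskiBound, volume_fundamentalDomain_fractionalIdealLatticeBasis,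
      volume_fundamentalDomain_latticeBasis, NumberField.mixedEmbedding.finrank, aux_nrc k hTR]
    simp [hs_def]
  have hlt : minkowskiBound k ↑1 < volume (convexBodyLT k f) := by
    rw [hmb, hvol, ENNReal.coe_lt_coe, ← NNReal.coe_lt_coe]
    push_cast
    have hs' : (0:ℝ) < (s : ℝ) := hs_pos
    have h2 : (2:ℝ) ^ (finrank ℚ k) * (2⁻¹:ℝ) ^ ((finrank ℚ k) - 1) = 2 := by
      have hd1 : (2:ℝ) ^ (finrank ℚ k) = 2 ^ ((finrank ℚ k) - 1) * 2 := by
        rw [← pow_succ]; congr 1; omega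
      rw [hd1, mul_comm ((2:ℝ) ^ ((finrank ℚ k)-1)) 2, mul_assoc, ← mul_pow]
      norm_num
    calc (s:ℝ) * 2 ^ (finrank ℚ k) < 2 * ((s:ℝ) * 2 ^ (finrank ℚ k)) := by
          have : (0:ℝ) < (s:ℝ) * 2 ^ (finrank ℚ k) := by positivity
          linarith
      _ = (2:ℝ) ^ (finrank ℚ k) * ((2:ℝ) ^ (finrank ℚ k) * s * (2⁻¹) ^ ((finrank ℚ k) - 1)) := by
          rw [show (2:ℝ)^(finrank ℚ k) * ((2:ℝ)^(finrank ℚ k)*(s:ℝ)*(2⁻¹)^((finrank ℚ k)-1)) =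
            ((2:ℝ)^(finrank ℚ k)*(2⁻¹)^((finrank ℚ k)-1))*((s:ℝ)*2^(finrank ℚ k)) by ring, h2]
  obtain ⟨a, ha_nz, ha_lt⟩ := exists_ne_zero_mem_ringOfIntegers_lt k hlt
  refine ⟨a, ha_nz, ?_, ?_⟩
  · have h1 : w₀ (a : k) < (B : ℝ) := by simpa [hf_def] using ha_lt w₀
    refine h1.trans_le ?_
    rw [hB_def]
    push_cast
    rw [hs_def, Real.coe_sqrt, coe_nnnorm, Int.norm_eq_abs]
  · intro w hw
    have h1 : w (a : k) < ((2⁻¹ : ℝ≥0) : ℝ) := by simpa [hf_def, if_neg hw] using ha_lt w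
    refine h1.trans_le ?_
    norm_num

end mink

lemma aux_arith (d : ℕ) (hd : 2 ≤ d) (D : ℝ) (hD3 : 3 ≤ D)
    (hDlow : (9/4:ℝ) ^ (d-1) < D) :
    (1 + (2:ℝ) ^ d * Real.sqrt D) * (3/2) ^ (d-1) < D ^ (10:ℕ) := by
  have hD1 : (1:ℝ) ≤ D := by linarith
  have hD0 : (0:ℝ) ≤ D := by linarith
  have hs1 : 1 ≤ Real.sqrt D := by
    rw [show (1:ℝ) = Real.sqrt 1 by simp]
    exact Real.sqrt_le_sqrt hD1
  have hs0 : 0 < Real.sqrt D := by linarith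
  have hsD : Real.sqrt D ≤ D := by
    nlinarith [Real.sq_sqrt hD0, Real.sqrt_nonneg D]
  have h2d : (2:ℝ) ≤ 2 ^ d := by
    calc (2:ℝ) = 2 ^ 1 := (pow_one 2).symm
    _ ≤ 2 ^ d := pow_le_pow_right₀ one_le_two (by omega)
  have step1 : 1 + (2:ℝ) ^ d * Real.sqrt D ≤ 2 ^ (d+1) * Real.sqrt D := by
    have h1 : (1:ℝ) ≤ 2 ^ d * Real.sqrt D := by nlinarith
    rw [pow_succ]
    nlinarith [pow_pos (show (0:ℝ) < 2 by norm_num) d]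
  have step2 : (2:ℝ) ^ (d+1) * (3/2) ^ (d-1) ≤ 6 ^ d := by
    have h32 : ((3:ℝ)/2) ^ (d-1) ≤ (3/2) ^ d := pow_le_pow_right₀ (by norm_num) (by omega)
    calc (2:ℝ) ^ (d+1) * (3/2) ^ (d-1) ≤ 2 ^ (d+1) * (3/2) ^ d :=
          mul_le_mul_of_nonneg_left h32 (by positivity)
      _ = 2 * (2 ^ d * (3/2) ^ d) := by ring
      _ = 2 * 3 ^ d := by rw [← mul_pow]; norm_num
      _ ≤ 2 ^ d * 3 ^ d := by gcongr
      _ = 6 ^ d := by rw [← mul_pow]; norm_num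
  have step3 : (6:ℝ) ^ d < D ^ (9:ℕ) := by
    calc (6:ℝ) ^ d < ((9/4:ℝ)^4) ^ d :=
          pow_lt_pow_left₀ (by norm_num) (by norm_num) (by omega)
      _ = (9/4:ℝ) ^ (4*d) := by rw [← pow_mul]
      _ ≤ (9/4:ℝ) ^ (9*(d-1)) := pow_le_pow_right₀ (by norm_num) (by omega)
      _ = ((9/4:ℝ) ^ (d-1)) ^ 9 := by rw [← pow_mul, Nat.mul_comm]
      _ < D ^ (9:ℕ) := pow_lt_pow_left₀ hDlow (by positivity) (by norm_num)
  calc (1 + (2:ℝ) ^ d * Real.sqrt D) * (3/2) ^ (d-1)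
      ≤ (2 ^ (d+1) * Real.sqrt D) * (3/2) ^ (d-1) :=
        mul_le_mul_of_nonneg_right step1 (by positivity)
    _ = (2 ^ (d+1) * (3/2) ^ (d-1)) * Real.sqrt D := by ring
    _ ≤ 6 ^ d * Real.sqrt D := mul_le_mul_of_nonneg_right step2 hs0.le
    _ < D ^ (9:ℕ) * Real.sqrt D := mul_lt_mul_of_pos_right step3 hs0
    _ ≤ D ^ (9:ℕ) * D := mul_le_mul_of_nonneg_left hsD (by positivity)
    _ = D ^ (10:ℕ) := by ring

section assemble
variable (k : Type) [Field k] [NumberField k]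

lemma aux_main (hTR : ∀ φ : k →+* ℂ, ∀ x : k, (φ x).im = 0)
    (hd : 2 ≤ finrank ℚ k) (v : Fin (finrank ℚ k) → (k →+* ℝ))
    (hv : Function.Bijective v) (h0 : 0 < finrank ℚ k) :
    ∃ θ : 𝓞 k,
      1 < v ⟨0, h0⟩ (θ : k) ∧
      (∀ j, j ≠ ⟨0, h0⟩ → |v j (θ : k)| < 1) ∧
      IntermediateField.adjoin ℚ {(θ : k)} = ⊤ ∧
      |((Algebra.norm ℚ (1 - (θ : k)) : ℚ) : ℝ)| < |(discr k : ℝ)| ^ (10:ℕ) := by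
  classical
  obtain ⟨a, ha_nz, haB, haS⟩ := aux_exists k hTR hd v hv h0
  set w₀ := WW k v ⟨0, h0⟩ with hw₀_def
  have hmult : ∀ w : InfinitePlace k, mult w = 1 := fun w => by
    rw [mult, if_pos (aux_allreal k hTR w)]
  have hwneg : ∀ w : InfinitePlace k, ∀ x : k, w (-x) = w x := fun w x => w.1.map_neg x
  have hank : (a : k) ≠ 0 := RingOfIntegers.coe_ne_zero_iff.mpr ha_nz
  have hw_pos : ∀ w : InfinitePlace k, 0 < w (a : k) := fun w => pos_iff.mpr hank
  -- the product over the other places is < 1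
  have hcard_erase : (Finset.univ.erase w₀).card = finrank ℚ k - 1 := by
    rw [Finset.card_erase_of_mem (Finset.mem_univ w₀), Finset.card_univ, aux_card k hTR]
  have herase_ne : (Finset.univ.erase w₀).Nonempty := by
    rw [← Finset.card_pos, hcard_erase]; omega
  have hP1 : ∏ w ∈ Finset.univ.erase w₀, w (a : k) < 1 := by
    calc ∏ w ∈ Finset.univ.erase w₀, w (a : k) < ∏ _w ∈ Finset.univ.erase w₀, (1:ℝ) := by
          refine Finset.prod_lt_prod_of_nonempty (fun w _ => hw_pos w) (fun w hw => ?_) herase_ne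
          have := haS w (Finset.ne_of_mem_erase hw)
          linarith
      _ = 1 := Finset.prod_const_one
  have hNa : (1:ℝ) ≤ |((Algebra.norm ℚ ((a : k)) : ℚ) : ℝ)| := by
    have h1 : 1 ≤ |Algebra.norm ℤ a| := Int.one_le_abs (Algebra.norm_ne_zero_iff.mpr ha_nz)
    rw [← Algebra.coe_norm_int]
    exact_mod_cast h1
  have hprodA : ∏ w : InfinitePlace k, w (a : k) = |((Algebra.norm ℚ ((a : k)) : ℚ) : ℝ)| := by
    rw [show |((Algebra.norm ℚ ((a : k)) : ℚ) : ℝ)| = ((|Algebra.norm ℚ ((a : k))| : ℚ) : ℝ) by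
      push_cast; ring, ← prod_eq_abs_norm]
    exact Finset.prod_congr rfl fun w _ => by rw [hmult, pow_one]
  have hw₀a : 1 < w₀ (a : k) := by
    by_contra hcon
    push_neg at hcon
    have hsplit : ∏ w : InfinitePlace k, w (a : k)
        = w₀ (a : k) * ∏ w ∈ Finset.univ.erase w₀, w (a : k) :=
      (Finset.mul_prod_erase Finset.univ _ (Finset.mem_univ w₀)).symm
    have : ∏ w : InfinitePlace k, w (a : k) < 1 := by
      rw [hsplit]
      calc w₀ (a : k) * ∏ w ∈ Finset.univ.erase w₀, w (a : k)
          ≤ 1 * ∏ w ∈ Finset.univ.erase w₀, w (a : k) := by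
            apply mul_le_mul_of_nonneg_right hcon
            exact Finset.prod_nonneg fun w _ => (hw_pos w).le
        _ < 1 := by rw [one_mul]; exact hP1
    rw [hprodA] at this
    linarith
  -- choose the sign
  set θ : 𝓞 k := if 0 ≤ v ⟨0, h0⟩ (a : k) then a else -a with hθ_def
  have hθ_nz : θ ≠ 0 := by
    rw [hθ_def]; split_ifs
    · exact ha_nz
    · exact neg_ne_zero.mpr ha_nz
  have hθw : ∀ w : InfinitePlace k, w (θ : k) = w (a : k) := by
    intro w
    rw [hθ_def]; split_ifs
    · rfl
    · push_cast
      exact hwneg w (a : k)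
  have hvθ : ∀ j, v j (θ : k) = if 0 ≤ v ⟨0, h0⟩ (a : k) then v j (a : k) else -(v j (a : k)) := by
    intro j
    rw [hθ_def]
    split_ifs <;> push_cast <;> simp
  have hv₀θ : v ⟨0, h0⟩ (θ : k) = |v ⟨0, h0⟩ (a : k)| := by
    rw [hvθ]
    split_ifs with h
    · exact (abs_of_nonneg h).symm
    · exact (abs_of_neg (lt_of_not_ge h)).symm
  have habs : ∀ j, |v j (θ : k)| = |v j (a : k)| := by
    intro j
    rw [hvθ]
    split_ifs
    · rfl
    · exact abs_neg _
  have h1 : 1 < v ⟨0, h0⟩ (θ : k) := by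
    rw [hv₀θ, ← WW_apply]
    exact hw₀a
  have h2 : ∀ j, j ≠ ⟨0, h0⟩ → |v j (θ : k)| < 1 := by
    intro j hj
    rw [habs, ← WW_apply]
    have hne : WW k v j ≠ w₀ := fun hcon => hj (WW_inj k v hv.1 hcon)
    have := haS _ hne
    linarith
  have hsmall : ∀ ⦃w' : InfinitePlace k⦄, w' ≠ w₀ → w' (θ : k) < 1 := by
    intro w' hw'
    rw [hθw]
    have := haS w' hw'
    linarith
  have hadj : IntermediateField.adjoin ℚ {(θ : k)} = ⊤ :=
    NumberField.is_primitive_element_of_infinitePlace_lt hθ_nz hsmall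
      (Or.inl (aux_allreal k hTR w₀))
  refine ⟨θ, h1, h2, hadj, ?_⟩
  -- the norm bound
  have hsub : ∀ w : InfinitePlace k, w (1 - (θ : k)) ≤ 1 + w (θ : k) := by
    intro w
    calc w (1 - (θ : k)) = w (1 + -(θ : k)) := by rw [sub_eq_add_neg]
      _ ≤ w 1 + w (-(θ : k)) := w.1.add_le _ _
      _ = 1 + w (θ : k) := by rw [map_one, hwneg]
  have hprodN : |((Algebra.norm ℚ (1 - (θ : k)) : ℚ) : ℝ)|
      = ∏ w : InfinitePlace k, w (1 - (θ : k)) := by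
    rw [show |((Algebra.norm ℚ (1 - (θ : k)) : ℚ) : ℝ)|
        = ((|Algebra.norm ℚ (1 - (θ : k))| : ℚ) : ℝ) by push_cast; ring, ← prod_eq_abs_norm]
    exact (Finset.prod_congr rfl fun w _ => by rw [hmult, pow_one]).symm
  set D := |(discr k : ℝ)| with hD_def
  set B := (2:ℝ) ^ (finrank ℚ k) * Real.sqrt D with hB_def
  have hboundw₀ : w₀ (1 - (θ : k)) ≤ 1 + B := by
    refine (hsub w₀).trans ?_
    have : w₀ (θ : k) ≤ B := by rw [hθw]; exact haB.le
    linarith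
  have hbound_rest : ∏ w ∈ Finset.univ.erase w₀, w (1 - (θ : k)) ≤ (3/2:ℝ) ^ (finrank ℚ k - 1) := by
    rw [← hcard_erase, ← Finset.prod_const]
    refine Finset.prod_le_prod (fun w _ => apply_nonneg _ _) (fun w hw => ?_)
    refine (hsub w).trans ?_
    have h' : w (θ : k) < 1/2 := by rw [hθw]; exact haS w (Finset.ne_of_mem_erase hw)
    linarith
  have hB0 : 0 ≤ 1 + B := by positivity
  have hD3 : (3:ℝ) ≤ D := by
    have := NumberField.abs_discr_gt_two (K := k) (by omega)
    rw [hD_def, ← Int.cast_abs]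
    exact_mod_cast this
  have hDlow : (9/4:ℝ) ^ (finrank ℚ k - 1) < D := by
    have hge := NumberField.abs_discr_ge (K := k) (by omega)
    rw [Int.cast_abs] at hge
    have hpi : (9/4:ℝ) ^ (finrank ℚ k) < (3 * Real.pi / 4) ^ (finrank ℚ k) :=
      pow_lt_pow_left₀ (by nlinarith [Real.pi_gt_three]) (by norm_num) (by omega)
    have heq : (9/4:ℝ) ^ (finrank ℚ k - 1) = (4/9) * (9/4) ^ (finrank ℚ k) := by
      obtain ⟨m, hm⟩ : ∃ m, finrank ℚ k = m + 1 := ⟨finrank ℚ k - 1, by omega⟩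
      rw [hm, Nat.add_sub_cancel, pow_succ]
      ring
    rw [heq, hD_def]
    calc (4/9:ℝ) * (9/4) ^ (finrank ℚ k) < (4/9) * (3 * Real.pi / 4) ^ (finrank ℚ k) := by
          apply mul_lt_mul_of_pos_left hpi (by norm_num)
      _ ≤ |(discr k : ℝ)| := hge
  calc |((Algebra.norm ℚ (1 - (θ : k)) : ℚ) : ℝ)|
      = ∏ w : InfinitePlace k, w (1 - (θ : k)) := hprodN
    _ = w₀ (1 - (θ : k)) * ∏ w ∈ Finset.univ.erase w₀, w (1 - (θ : k)) :=
        (Finset.mul_prod_erase Finset.univ _ (Finset.mem_univ w₀)).symm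
    _ ≤ (1 + B) * (3/2:ℝ) ^ (finrank ℚ k - 1) := by
        apply mul_le_mul hboundw₀ hbound_rest (Finset.prod_nonneg fun w _ => apply_nonneg _ _) hB0
    _ < D ^ (10:ℕ) := aux_arith (finrank ℚ k) hd D hD3 hDlow

end assemble

/-- There is an absolute `δ > 0` such that every totally real number field `k` of degree
`d ≥ 2` contains a Pisot number `θ` generating `k` over `ℚ` with
`|N_{k/ℚ}(1 − θ)| < |Δ_k|^δ`. -/
theorem stmt_6 :
    ∃ δ : ℝ, 0 < δ ∧
      ∀ (k : Type) [Field k] [NumberField k],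
        (∀ φ : k →+* ℂ, ∀ x : k, (φ x).im = 0) →
        2 ≤ Module.finrank ℚ k →
        ∀ (v : Fin (Module.finrank ℚ k) → (k →+* ℝ)), Function.Bijective v →
        ∀ (h0 : 0 < Module.finrank ℚ k),
          ∃ θ : 𝓞 k,
            1 < v ⟨0, h0⟩ (θ : k) ∧
            (∀ j, j ≠ ⟨0, h0⟩ → |v j (θ : k)| < 1) ∧
            IntermediateField.adjoin ℚ {(θ : k)} = ⊤ ∧
            |((Algebra.norm ℚ (1 - (θ : k)) : ℚ) : ℝ)| < |(NumberField.discr k : ℝ)| ^ δ := by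
  refine ⟨10, by norm_num, ?_⟩
  intro k _ _ hTR hd v hv h0
  obtain ⟨θ, h1, h2, h3, h4⟩ := aux_main k hTR hd v hv h0
  refine ⟨θ, h1, h2, h3, ?_⟩
  rw [show (10:ℝ) = ((10:ℕ):ℝ) by norm_num, Real.rpow_natCast]
  exact h4
end

section
/- Let k ⊆ l be number fields with [l : k] = 2 and d = [k : ℚ], and suppose l = k(β) where β ∈ 𝓞_l satisfies β² = α for some α ∈ 𝓞_k. Then |Δ_l| ≤ |Δ_k|² · 2^{2d} · |N_{k/ℚ}(α)|. -/
open NumberField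

/-- If `l = k(β)` is a quadratic extension of number fields with `β ∈ 𝓞_l`, `β² = α ∈ 𝓞_k`,
then `|Δ_l| ≤ |Δ_k|² · 2^{2d} · |N_{k/ℚ}(α)|` where `d = [k : ℚ]`. -/
theorem stmt_8 (k l : Type) [Field k] [NumberField k] [Field l] [NumberField l]
    [Algebra k l] (h2 : Module.finrank k l = 2)
    (β : 𝓞 l) (α : 𝓞 k) (hβ : β ^ 2 = algebraMap (𝓞 k) (𝓞 l) α)
    (hgen : IntermediateField.adjoin k {(β : l)} = ⊤) :
    (NumberField.discr l).natAbs ≤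
      (NumberField.discr k).natAbs ^ 2 * 2 ^ (2 * Module.finrank ℚ k) *
        (Algebra.norm ℤ α).natAbs := by
  classical
  have hfin : FiniteDimensional k l := FiniteDimensional.right ℚ k l
  set d := Module.finrank ℚ k with hd
  set a : k := (algebraMap (𝓞 k) k α) with ha
  set β' : l := (β : l) with hb'
  have hβ' : β' ^ 2 = algebraMap k l a := by
    rw [hb', ← map_pow, hβ]; rfl
  -- α ≠ 0
  have hα0 : α ≠ 0 := by
    rintro rfl
    have hb0 : β = 0 := by
      have : β ^ 2 = 0 := by rw [hβ, map_zero]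
      exact (pow_eq_zero_iff two_ne_zero).mp this
    have hz : β' = 0 := by rw [hb', hb0]; simp
    rw [hz] at hgen
    have : (⊥ : IntermediateField k l) = ⊤ := by
      rw [← hgen]; exact (IntermediateField.adjoin_zero).symm
    have h1 : Module.finrank k l = 1 := by
      rw [← IntermediateField.finrank_top', ← this, IntermediateField.finrank_bot]
    omega
  -- minimal polynomial of β' over k
  have hint : IsIntegral k β' := IsIntegral.of_finite k β'
  have hdegmp : (minpoly k β').natDegree = 2 := by
    rw [← IntermediateField.adjoin.finrank hint, hgen, IntermediateField.finrank_top']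
    exact h2
  have hq : minpoly k β' = Polynomial.X ^ 2 - Polynomial.C a := by
    refine (Polynomial.eq_of_monic_of_dvd_of_natDegree_le
      (minpoly.monic hint) (Polynomial.monic_X_pow_sub_C a two_ne_zero)
      (minpoly.dvd k β' ?_) ?_).symm
    · rw [map_sub, map_pow, Polynomial.aeval_X, Polynomial.aeval_C, hβ', sub_self]
    · rw [Polynomial.natDegree_X_pow_sub_C, hdegmp]
  -- trace of β' over k is zero
  let epb : (IntermediateField.adjoin k {β'}) ≃ₐ[k] l := (IntermediateField.equivOfEq hgen).trans IntermediateField.topEquiv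
  let pb : PowerBasis k l := (IntermediateField.adjoin.powerBasis hint).map epb
  have hpbgen : pb.gen = β' := rfl
  have htrβ : Algebra.trace k l β' = 0 := by
    rw [← hpbgen, PowerBasis.trace_gen_eq_nextCoeff_minpoly, hpbgen, hq]
    simp [Polynomial.nextCoeff, Polynomial.natDegree_X_pow_sub_C, Polynomial.coeff_X_pow]
  -- trace computations
  have e1 : ∀ c : k, Algebra.trace ℚ l (algebraMap k l c) = 2 * Algebra.trace ℚ k c := by
    intro c
    rw [← Algebra.trace_trace (S := k), Algebra.trace_algebraMap, h2, two_smul ℕ c, map_add,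
      two_mul]
  have e2 : ∀ c : k, Algebra.trace ℚ l (algebraMap k l c * β') = 0 := by
    intro c
    rw [← Algebra.trace_trace (S := k), ← Algebra.smul_def, map_smul, htrβ, smul_zero, map_zero]
  have e3 : ∀ c : k, Algebra.trace ℚ l (algebraMap k l c * β' ^ 2)
      = 2 * Algebra.trace ℚ k (c * a) := by
    intro c; rw [hβ', ← map_mul]; exact e1 _
  -- integral bases
  set ι := Module.Free.ChooseBasisIndex ℤ (𝓞 k) with hι
  set ι' := Module.Free.ChooseBasisIndex ℤ (𝓞 l) with hι'
  let bk := RingOfIntegers.basis k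
  let bl := RingOfIntegers.basis l
  have cardι : Fintype.card ι = d := by
    rw [← Module.finrank_eq_card_chooseBasisIndex, RingOfIntegers.rank]
  have cardι' : Fintype.card ι' = 2 * d := by
    rw [← Module.finrank_eq_card_chooseBasisIndex, RingOfIntegers.rank, hd,
      ← Module.finrank_mul_finrank ℚ k l, h2, mul_comm]
  let v : ι × Fin 2 → 𝓞 l := fun p => algebraMap (𝓞 k) (𝓞 l) (bk p.1) * β ^ (p.2 : ℕ)
  let w : ι × Fin 2 → l := fun p => algebraMap k l (integralBasis k p.1) * β' ^ (p.2 : ℕ)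
  have hvw : ∀ p, (v p : l) = w p := by
    intro p
    simp only [v, w, integralBasis_apply, map_mul, map_pow, hb']
    rfl
  let A : Matrix ι ι ℚ := Algebra.traceMatrix ℚ (integralBasis k)
  let Lm : Matrix ι ι ℚ := Algebra.leftMulMatrix (integralBasis k) a
  have hdetA : A.det = (discr k : ℚ) := by
    rw [coe_discr, Algebra.discr_def]
  have hdetL : Lm.det = (Algebra.norm ℤ α : ℚ) := by
    rw [Algebra.coe_norm_int, Algebra.norm_eq_matrix_det (integralBasis k)]
  have hAL : ∀ i j, Algebra.trace ℚ k (integralBasis k i * (integralBasis k j * a))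
      = (A * Lm) i j := by
    intro i j
    have hx : integralBasis k j * a
        = ∑ m, ((integralBasis k).repr (a * integralBasis k j) m) • integralBasis k m := by
      rw [Module.Basis.sum_repr, mul_comm]
    rw [hx, Finset.mul_sum, map_sum, Matrix.mul_apply]
    refine Finset.sum_congr rfl fun m _ => ?_
    rw [mul_smul_comm, map_smul, smul_eq_mul, mul_comm]
    congr 1
    simp [Lm, Algebra.leftMulMatrix_eq_repr_mul, integralBasis_apply]
  let f : ι ⊕ ι ≃ ι × Fin 2 :=
    { toFun := Sum.elim (fun i => (i, 0)) (fun i => (i, 1))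
      invFun := fun p => if p.2 = 0 then Sum.inl p.1 else Sum.inr p.1
      left_inv := by rintro (i | i) <;> simp
      right_inv := by rintro ⟨i, j⟩; fin_cases j <;> simp }
  let T : Matrix (ι × Fin 2) (ι × Fin 2) ℚ := Algebra.traceMatrix ℚ w
  have hw : ∀ p q : ι × Fin 2, w p * w q
      = algebraMap k l (integralBasis k p.1 * integralBasis k q.1)
        * β' ^ ((p.2 : ℕ) + (q.2 : ℕ)) := by
    intro p q
    simp only [w, map_mul, pow_add]
    ring
  have hsub : T.submatrix f f = Matrix.fromBlocks ((2:ℚ) • A) 0 0 ((2:ℚ) • (A * Lm)) := by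
    ext p q
    rcases p with i | i <;> rcases q with j | j <;>
      simp only [Matrix.submatrix_apply, f, Equiv.coe_fn_mk, Sum.elim_inl, Sum.elim_inr, T,
        Algebra.traceMatrix_apply, Algebra.traceForm_apply, hw, Matrix.fromBlocks_apply₁₁,
        Matrix.fromBlocks_apply₁₂, Matrix.fromBlocks_apply₂₁, Matrix.fromBlocks_apply₂₂,
        Matrix.smul_apply, Matrix.zero_apply, smul_eq_mul]
    · rw [show (((i, (0:Fin 2)).2 : ℕ) + ((j, (0:Fin 2)).2 : ℕ)) = 0 from rfl, pow_zero,
        mul_one, e1]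
      simp [A, Algebra.traceMatrix_apply, Algebra.traceForm_apply]
    · rw [show (((i, (0:Fin 2)).2 : ℕ) + ((j, (1:Fin 2)).2 : ℕ)) = 1 from rfl, pow_one, e2]
    · rw [show (((i, (1:Fin 2)).2 : ℕ) + ((j, (0:Fin 2)).2 : ℕ)) = 1 from rfl, pow_one, e2]
    · rw [show (((i, (1:Fin 2)).2 : ℕ) + ((j, (1:Fin 2)).2 : ℕ)) = 2 from rfl, e3, mul_assoc, hAL]
  have hdetT : T.det = 2 ^ (2*d) * (discr k : ℚ)^2 * (Algebra.norm ℤ α : ℚ) := by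
    rw [← Matrix.det_submatrix_equiv_self f T, hsub, Matrix.det_fromBlocks_zero₁₂,
      Matrix.det_smul, Matrix.det_smul, Matrix.det_mul, cardι, hdetA, hdetL]
    ring
  have hTv : T = (algebraMap ℤ ℚ).mapMatrix (Algebra.traceMatrix ℤ v) := by
    ext p q
    simp only [T, RingHom.mapMatrix_apply, Matrix.map_apply, Algebra.traceMatrix_apply,
      Algebra.traceForm_apply]
    rw [← hvw, ← hvw]
    have h1 : ((v p : l)) * (v q : l) = ((v p * v q : 𝓞 l) : l) := (map_mul _ _ _).symm
    rw [h1, ← Algebra.coe_trace_int]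
    simp [algebraMap_int_eq]
  have hZcast : ((Algebra.discr ℤ v : ℤ) : ℚ)
      = 2 ^ (2*d) * (discr k : ℚ)^2 * (Algebra.norm ℤ α : ℚ) := by
    rw [← hdetT, hTv, Algebra.discr_def]
    rw [← RingHom.map_det]
    simp [algebraMap_int_eq]
  have hZ : Algebra.discr ℤ v = 2 ^ (2*d) * (discr k)^2 * (Algebra.norm ℤ α) := by
    exact_mod_cast hZcast
  let e' : ι' ≃ ι × Fin 2 := Fintype.equivOfCardEq (by simp [cardι', cardι, mul_comm])
  let P : Matrix ι' ι' ℤ := Matrix.of fun i j => bl.repr (v (e' j)) i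
  have hveq : (v ∘ e') = Matrix.vecMul (⇑bl) (P.map (algebraMap ℤ (𝓞 l))) := by
    funext j
    rw [Function.comp_apply, ← Module.Basis.sum_repr bl (v (e' j))]
    simp only [Matrix.vecMul, dotProduct, Matrix.map_apply, P, Matrix.of_apply,
      algebraMap_int_eq, eq_intCast]
    refine Finset.sum_congr rfl fun i _ => ?_
    rw [zsmul_eq_mul, mul_comm]
  have hd1 : Algebra.discr ℤ (v ∘ e') = P.det ^ 2 * discr l := by
    rw [hveq, Algebra.discr_of_matrix_vecMul]
  have hd2 : Algebra.discr ℤ (v ∘ e') = Algebra.discr ℤ v := by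
    rw [Algebra.discr_def, Algebra.discr_def,
      ← Matrix.det_submatrix_equiv_self e' (Algebra.traceMatrix ℤ v)]
    congr 1
  have hN0 : Algebra.norm ℤ α ≠ 0 := by
    have h1 : (α : k) ≠ 0 := by
      intro h; exact hα0 (by exact_mod_cast h)
    have h2' : Algebra.norm ℚ (α : k) ≠ 0 := Algebra.norm_ne_zero_iff.mpr h1
    intro h
    apply h2'
    rw [← Algebra.coe_norm_int, h]
    norm_num
  have hdiscrv_ne : Algebra.discr ℤ v ≠ 0 := by
    rw [hZ]
    exact mul_ne_zero (mul_ne_zero (pow_ne_zero _ two_ne_zero)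
      (pow_ne_zero _ (discr_ne_zero k))) hN0
  have hP0 : P.det ≠ 0 := by
    intro h
    rw [← hd2, hd1, h] at hdiscrv_ne
    simp at hdiscrv_ne
  have hmain : Algebra.discr ℤ v = P.det ^ 2 * discr l := by rw [← hd2, hd1]
  have hle : (discr l).natAbs ≤ (Algebra.discr ℤ v).natAbs := by
    rw [hmain, Int.natAbs_mul]
    have h1 : 1 ≤ (P.det ^ 2).natAbs := Int.natAbs_pos.mpr (pow_ne_zero 2 hP0)
    exact Nat.le_mul_of_pos_left _ (by omega)
  rw [hZ] at hle
  refine hle.trans_eq ?_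
  simp only [Int.natAbs_mul, Int.natAbs_pow, Int.natAbs_natCast]
  ring
end

section
/- Let G be a group, N a normal subgroup of G, and Q = G/N. Fix n ≥ 1 and r ≥ 0, and suppose that every finitely generated subgroup of Q can be generated by at most r elements. If both N and Q have only finitely many subgroups of index at most n, then G has only finitely many subgroups of index at most n, and s_n(G) ≤ s_n(N) · s_n(Q) · n^r. -/
/-!
The map `H ↦ (H ∩ N, HN/N)` sends subgroups of index at most `n` of `G` to pairs of subgroups
of index at most `n` of `N` and `Q`, so it suffices to bound its fibres by `n ^ r`. Let `F` be a
finite set of subgroups in the fibre over `(A, B)`. The image `W` of `⋂ F` has finite index in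
`B`, so `B = C ⊔ W` with `C` finitely generated, hence `C = ⟨S⟩` with `|S| ≤ r`. A member `H`
of `F` is determined by the cosets of `A` containing its lifts of the elements of `S`: if two
members agree there, their intersection still maps onto `⟨S⟩ ⊔ W = B`, and two subgroups with
the same intersection with `N` coincide once their intersection has the same image as both.
This injects `F` into `S → N ⧸ A`, a set of size at most `|N : A| ^ r ≤ n ^ r`.
-/

namespace Set

theorem finite_and_ncard_le_of_forall_finset_card_le {α : Type*} {X : Set α} {m : ℕ}
    (h : ∀ s : Finset α, ↑s ⊆ X → s.card ≤ m) : X.Finite ∧ X.ncard ≤ m := by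
  have hX : X.Finite := by
    by_contra hinf
    obtain ⟨s, hsX, hs⟩ := Infinite.exists_subset_card_eq hinf (m + 1)
    have := h s hsX
    omega
  refine ⟨hX, ?_⟩
  rw [ncard_eq_toFinset_card X hX]
  exact h _ (by simp)

theorem finite_and_ncard_le_mul_of_mapsTo {α β : Type*} {f : α → β} {X : Set α} {Y : Set β}
    (hY : Y.Finite) (hf : MapsTo f X Y) {m : ℕ}
    (hfib : ∀ b ∈ Y, ∀ s : Finset α, ↑s ⊆ X → (∀ a ∈ s, f a = b) → s.card ≤ m) :
    X.Finite ∧ X.ncard ≤ Y.ncard * m := by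
  classical
  refine finite_and_ncard_le_of_forall_finset_card_le fun s hs => ?_
  rw [ncard_eq_toFinset_card Y hY, mul_comm]
  refine Finset.card_le_mul_card_image_of_maps_to (fun a ha => hY.mem_toFinset.mpr (hf (hs ha))) m
    fun b hb => hfib b (hY.mem_toFinset.mp hb) _ (fun a ha => hs (Finset.mem_filter.mp ha).1) ?_
  exact fun a ha => (Finset.mem_filter.mp ha).2

end Set

namespace Subgroup

variable {G : Type*} [Group G]

theorem exists_fg_le_sup_of_relIndex_ne_zero {W B : Subgroup G} (hW : W.relIndex B ≠ 0) :
    ∃ C : Subgroup G, C.FG ∧ C ≤ B ∧ B ≤ C ⊔ W := by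
  have : (W.subgroupOf B).FiniteIndex := ⟨hW⟩
  let reps : B ⧸ W.subgroupOf B → G := fun z => (z.out : G)
  refine ⟨closure (Set.range reps), ⟨(Set.finite_range reps).toFinset, by simp⟩,
    (closure_le B).mpr (Set.range_subset_iff.mpr fun z => z.out.2), fun b hb => ?_⟩
  let z : B ⧸ W.subgroupOf B := QuotientGroup.mk ⟨b, hb⟩
  have hzW : (reps z)⁻¹ * b ∈ W := by
    simpa [mem_subgroupOf] using QuotientGroup.eq.mp (QuotientGroup.out_eq' z)
  simpa using mul_mem_sup (subset_closure (Set.mem_range_self (f := reps) z)) hzW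

theorem relIndex_le_index (H K : Subgroup G) [H.FiniteIndex] : H.relIndex K ≤ H.index := by
  simpa only [relIndex_top_right] using
    relIndex_le_of_le_right le_top (H.relIndex_top_right ▸ FiniteIndex.index_ne_zero)

theorem finiteIndex_map_of_surjective {G' : Type*} [Group G'] {f : G →* G'}
    (hf : Function.Surjective f) (H : Subgroup G) [H.FiniteIndex] : (H.map f).FiniteIndex :=
  ⟨ne_zero_of_dvd_ne_zero FiniteIndex.index_ne_zero (index_map_dvd H hf)⟩

theorem index_map_le_of_surjective {G' : Type*} [Group G'] {f : G →* G'}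
    (hf : Function.Surjective f) (H : Subgroup G) [H.FiniteIndex] : (H.map f).index ≤ H.index :=
  Nat.le_of_dvd (Nat.pos_of_ne_zero FiniteIndex.index_ne_zero) (index_map_dvd H hf)

variable {N : Subgroup G} [N.Normal]

theorem le_of_inf_le_of_map_le_map_inf {H K : Subgroup G} (hN : H ⊓ N ≤ K)
    (hmap : H.map (QuotientGroup.mk' N) ≤ (H ⊓ K).map (QuotientGroup.mk' N)) : H ≤ K := by
  intro h hh
  obtain ⟨k, ⟨hkH, hkK⟩, hk⟩ := hmap ⟨h, hh, rfl⟩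
  have hkh : k⁻¹ * h ∈ H ⊓ N := ⟨H.mul_mem (H.inv_mem hkH) hh, QuotientGroup.eq.mp hk⟩
  simpa using K.mul_mem hkK (hN hkh)

theorem eq_of_subgroupOf_eq_of_map_le_map_inf {H H' : Subgroup G}
    (hA : H.subgroupOf N = H'.subgroupOf N)
    (hB : H.map (QuotientGroup.mk' N) = H'.map (QuotientGroup.mk' N))
    (hle : H.map (QuotientGroup.mk' N) ≤ (H ⊓ H').map (QuotientGroup.mk' N)) : H = H' := by
  have hinf : H ⊓ N = H' ⊓ N := subgroupOf_inj.mp hA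
  refine le_antisymm (le_of_inf_le_of_map_le_map_inf (hinf.le.trans inf_le_left) hle) ?_
  exact le_of_inf_le_of_map_le_map_inf (hinf.ge.trans inf_le_left) (inf_comm H H' ▸ hB ▸ hle)

theorem card_le_index_pow_of_subgroupOf_eq_of_map_eq {r : ℕ}
    (hrank : ∀ Q' : Subgroup (G ⧸ N), Q'.FG →
      ∃ S : Finset (G ⧸ N), S.card ≤ r ∧ closure (S : Set (G ⧸ N)) = Q')
    {A : Subgroup N} {B : Subgroup (G ⧸ N)} {F : Finset (Subgroup G)}
    (hF : ∀ H ∈ F, H.FiniteIndex) (hA : ∀ H ∈ F, H.subgroupOf N = A)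
    (hB : ∀ H ∈ F, H.map (QuotientGroup.mk' N) = B) :
    F.card ≤ A.index ^ r := by
  obtain rfl | ⟨H₀, hH₀⟩ := F.eq_empty_or_nonempty
  · simp
  have : H₀.FiniteIndex := hF H₀ hH₀
  have : A.FiniteIndex := hA H₀ hH₀ ▸ inferInstance
  let K : Subgroup G := ⨅ H ∈ F, H
  have : K.FiniteIndex := finiteIndex_iInf' id hF
  have := finiteIndex_map_of_surjective (QuotientGroup.mk'_surjective N) K
  have hKrel : (K.map (QuotientGroup.mk' N)).relIndex B ≠ 0 := FiniteIndex.index_ne_zero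
  obtain ⟨C, hCfg, hCB, hBC⟩ := exists_fg_le_sup_of_relIndex_ne_zero hKrel
  obtain ⟨S, hS, rfl⟩ := hrank C hCfg
  have hlift : ∀ H ∈ F, ∀ q ∈ S, ∃ h ∈ H, QuotientGroup.mk' N h = q := fun H hH q hq =>
    mem_map.mp (hB H hH ▸ hCB (subset_closure hq))
  choose lift hliftH hliftq using hlift
  have hdiff (H : F) (q : S) : (q.1.out)⁻¹ * lift H.1 H.2 q.1 q.2 ∈ N :=
    QuotientGroup.eq.mp ((QuotientGroup.out_eq' q.1).trans (hliftq _ H.2 _ q.2).symm)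
  -- `code H q` is the coset of `A` in which `H` lifts `q`, measured from the fixed lift `q.out`.
  let code (H : F) (q : S) : N ⧸ A := QuotientGroup.mk ⟨_, hdiff H q⟩
  have hcode : Function.Injective code := by
    intro H H' hHH'
    have hS : ∀ q ∈ S, q ∈ (H.1 ⊓ H'.1).map (QuotientGroup.mk' N) := by
      intro q hq
      have hquot := QuotientGroup.eq.mp (congrFun hHH' ⟨q, hq⟩)
      rw [← hA _ H.2, mem_subgroupOf] at hquot
      have hmem : lift H' H'.2 q hq ∈ H.1 := by
        simpa [mul_assoc] using H.1.mul_mem (hliftH _ H.2 q hq) hquot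
      exact ⟨_, ⟨hmem, hliftH _ H'.2 q hq⟩, hliftq _ H'.2 q hq⟩
    have hBHH' : B ≤ (H.1 ⊓ H'.1).map (QuotientGroup.mk' N) := by
      refine hBC.trans (sup_le ((closure_le _).mpr hS) (map_mono ?_))
      exact le_inf (biInf_le id H.2) (biInf_le id H'.2)
    exact Subtype.ext <| eq_of_subgroupOf_eq_of_map_le_map_inf
      ((hA _ H.2).trans (hA _ H'.2).symm) ((hB _ H.2).trans (hB _ H'.2).symm) (hB _ H.2 ▸ hBHH')
  calc F.card = Nat.card F := (Nat.card_eq_finsetCard F).symm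
    _ ≤ Nat.card (S → N ⧸ A) := Nat.card_le_card_of_injective code hcode
    _ = A.index ^ S.card := by rw [Nat.card_fun, ← index_eq_card, Nat.card_eq_finsetCard]
    _ ≤ A.index ^ r := Nat.pow_le_pow_right (Nat.pos_of_ne_zero FiniteIndex.index_ne_zero) hS

end Subgroup

theorem stmt_13_general (G : Type) [Group G] (N : Subgroup G) [N.Normal]
    (n : ℕ) (r : ℕ)
    (hrank : ∀ Q' : Subgroup (G ⧸ N), Q'.FG →
      ∃ S : Finset (G ⧸ N), S.card ≤ r ∧ Subgroup.closure (S : Set (G ⧸ N)) = Q')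
    (hN : {H : Subgroup ↥N | 0 < H.index ∧ H.index ≤ n}.Finite)
    (hQ : {H : Subgroup (G ⧸ N) | 0 < H.index ∧ H.index ≤ n}.Finite) :
    {H : Subgroup G | 0 < H.index ∧ H.index ≤ n}.Finite ∧
    Nat.card {H : Subgroup G // 0 < H.index ∧ H.index ≤ n} ≤
      Nat.card {H : Subgroup ↥N // 0 < H.index ∧ H.index ≤ n} *
        Nat.card {H : Subgroup (G ⧸ N) // 0 < H.index ∧ H.index ≤ n} * n ^ r := by
  have hπ := QuotientGroup.mk'_surjective N
  have hmaps : Set.MapsTo (fun H : Subgroup G => (H.subgroupOf N, H.map (QuotientGroup.mk' N)))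
      {H | 0 < H.index ∧ H.index ≤ n}
      ({A | 0 < A.index ∧ A.index ≤ n} ×ˢ {B | 0 < B.index ∧ B.index ≤ n}) := by
    rintro H ⟨hpos, hle⟩
    have : H.FiniteIndex := ⟨hpos.ne'⟩
    have := H.finiteIndex_map_of_surjective hπ
    exact ⟨⟨Nat.pos_of_ne_zero Subgroup.FiniteIndex.index_ne_zero,
        (H.relIndex_le_index N).trans hle⟩,
      ⟨Nat.pos_of_ne_zero Subgroup.FiniteIndex.index_ne_zero,
        (H.index_map_le_of_surjective hπ).trans hle⟩⟩
  obtain ⟨hfin, hcard⟩ := Set.finite_and_ncard_le_mul_of_mapsTo (hN.prod hQ) hmaps (m := n ^ r)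
    fun ⟨A, B⟩ ⟨⟨_, hA⟩, _⟩ F hF hAB =>
      (Subgroup.card_le_index_pow_of_subgroupOf_eq_of_map_eq hrank
        (fun H hH => ⟨(hF hH).1.ne'⟩) (fun H hH => congrArg Prod.fst (hAB H hH))
        (fun H hH => congrArg Prod.snd (hAB H hH))).trans (Nat.pow_le_pow_left hA r)
  exact ⟨hfin, hcard.trans_eq (by rw [Set.ncard_prod]; rfl)⟩

/-- If `N ⊴ G`, `Q = G/N` has all finitely generated subgroups generated by at most `r`
elements, and both `N` and `Q` have finitely many subgroups of index at most `n`, then so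
does `G`, and `s_n(G) ≤ s_n(N) · s_n(Q) · n^r`. -/
theorem stmt_13 (G : Type) [Group G] (N : Subgroup G) [N.Normal]
    (n : ℕ) (hn : 1 ≤ n) (r : ℕ)
    (hrank : ∀ Q' : Subgroup (G ⧸ N), Q'.FG →
      ∃ S : Finset (G ⧸ N), S.card ≤ r ∧ Subgroup.closure (S : Set (G ⧸ N)) = Q')
    (hN : {H : Subgroup ↥N | 0 < H.index ∧ H.index ≤ n}.Finite)
    (hQ : {H : Subgroup (G ⧸ N) | 0 < H.index ∧ H.index ≤ n}.Finite) :
    {H : Subgroup G | 0 < H.index ∧ H.index ≤ n}.Finite ∧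
    Nat.card {H : Subgroup G // 0 < H.index ∧ H.index ≤ n} ≤
      Nat.card {H : Subgroup ↥N // 0 < H.index ∧ H.index ≤ n} *
        Nat.card {H : Subgroup (G ⧸ N) // 0 < H.index ∧ H.index ≤ n} * n ^ r :=
  stmt_13_general G N n r hrank hN hQ
end

section
/- Let p be a prime and d ≥ 1. The elementary abelian p-group (ℤ/pℤ)^d has at least p^{⌊d²/4⌋} subgroups. -/
/-- The elementary abelian `p`-group `(ℤ/pℤ)^d` has at least `p^{⌊d²/4⌋}` subgroups. -/
theorem stmt_16 (p : ℕ) (hp : p.Prime) (d : ℕ) (hd : 1 ≤ d) :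
    p ^ (d ^ 2 / 4) ≤ Nat.card (AddSubgroup (Fin d → ZMod p)) := by
  haveI : Fact p.Prime := ⟨hp⟩
  set a := d / 2 with ha
  set b := d - a with hb
  have hab : a + b = d := by omega
  have hia : ∀ i : Fin a, (i : ℕ) < d := fun i => by omega
  have hjb : ∀ j : Fin b, a + (j : ℕ) < d := fun j => by omega
  -- the graph of a linear map, as a subgroup
  let S : (Fin b → Fin a → ZMod p) → AddSubgroup (Fin d → ZMod p) := fun M =>
    { carrier := {v | ∀ j : Fin b, v ⟨a + j, hjb j⟩ = ∑ i : Fin a, M j i * v ⟨i, hia i⟩}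
      zero_mem' := by simp
      add_mem' := by
        intro x y hx hy j
        simp only [Pi.add_apply, hx j, hy j, mul_add, Finset.sum_add_distrib]
      neg_mem' := by
        intro x hx j
        simp only [Pi.neg_apply, hx j, mul_neg, Finset.sum_neg_distrib] }
  have hinj : Function.Injective S := by
    intro M M' hMM
    funext j i
    -- the vector which is `e_i` on the left, `M · i` on the right
    set v : Fin d → ZMod p := fun k =>
      if h : (k : ℕ) < a then (if (⟨k, h⟩ : Fin a) = i then 1 else 0)
      else M ⟨(k : ℕ) - a, by omega⟩ i with hv
    have hvL : ∀ i' : Fin a, v ⟨i', hia i'⟩ = if i' = i then 1 else 0 := by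
      intro i'
      simp only [hv]
      rw [dif_pos i'.isLt]
    have hvR : ∀ j' : Fin b, v ⟨a + j', hjb j'⟩ = M j' i := by
      intro j'
      simp only [hv]
      rw [dif_neg (by omega)]
      congr 1
      ext
      simp
    have hvmem : v ∈ S M := by
      intro j'
      rw [hvR j']
      rw [Finset.sum_congr rfl fun i' _ => by rw [hvL i']]
      simp [mul_ite]
    rw [hMM] at hvmem
    have := hvmem j
    rw [hvR j, Finset.sum_congr rfl fun i' _ => by rw [hvL i']] at this
    simpa [mul_ite] using this
  have hcard : p ^ (d ^ 2 / 4) = Nat.card (Fin b → Fin a → ZMod p) := by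
    rw [Nat.card_eq_fintype_card]
    simp [Fintype.card_fun, ZMod.card, ← pow_mul]
    congr 1
    obtain ⟨k, hk⟩ | ⟨k, hk⟩ := Nat.even_or_odd d
    · have h2 : d ^ 2 = 4 * (k * k) := by subst hk; ring
      have h3 : a = k := by omega
      have h4 : b = k := by omega
      rw [h2, h3, h4, Nat.mul_div_cancel_left _ (by norm_num)]
    · have h2 : d ^ 2 = 4 * (k * k + k) + 1 := by subst hk; ring
      have h3 : a = k := by omega
      have h4 : b = k + 1 := by omega
      rw [h2, h3, h4]
      have h5 : k * (k + 1) = k * k + k := by ring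
      omega
  rw [hcard]
  exact Nat.card_le_card_of_injective S hinj
end
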